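/- arXiv:2406.05474 — 2 statements merged into one kernel-verified Lean document; each statement's English description precedes it below -/
import Mathlib

section
/- Let f : ℝ^d → ℝ be L-smooth (gradient L-Lipschitz) and μ-strongly convex with minimizer x*. Fix points x_g ∈ ℝ^d, a step γ > 0, random vector g ∈ ℝ^d (with finite second moment), and set x⁺ = x_g − γg. Then for any u ∈ ℝ^d: E[f(x⁺)] ≤ f(u) − ⟨∇f(x_g), u − x_g⟩ − (μ/2)‖u − x_g‖² − (γ/2)‖∇f(x_g)‖² + (γ/2)‖E[g] − ∇f(x_g)‖² + (Lγ²/2)E[‖g‖²]. -/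
open MeasureTheory RealInnerProductSpace

/-! With `v = y - x`, the function `t ↦ f (x + t • v) - t ⟪∇f x, v⟫ - (L/2) t² ‖v‖²` has derivative
`⟪∇f (x + t • v) - ∇f x, v⟫ - L t ‖v‖² ≤ 0` for `t ≥ 0` by Cauchy–Schwarz and the Lipschitz bound,
so it decreases on `[0, 1]`: `f y ≤ f x + ⟪∇f x, y - x⟫ + (L/2) ‖y - x‖²`. At `y = x_g - γ g` this
bounds `f(x⁺)` by a quadratic in `g`, and strong convexity bounds it below by another one, which
gives integrability. Taking expectations, strong convexity between `u` and `x_g` replaces `f(x_g)`,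
and the cross term is handled by `-2⟪a, m⟫ ≤ ‖m - a‖² - ‖a‖²`. -/

section Descent

variable {E : Type*} [NormedAddCommGroup E] [InnerProductSpace ℝ E]

theorem inner_sub_smul_sub_add_sq (w x v : E) (γ c : ℝ) :
    ⟪w, x - γ • v - x⟫ + c / 2 * ‖x - γ • v - x‖ ^ 2 = -(γ * ⟪w, v⟫) + c * γ ^ 2 / 2 * ‖v‖ ^ 2 := by
  rw [sub_sub_cancel_left, inner_neg_right, real_inner_smul_right, norm_neg, norm_smul,
    mul_pow, Real.norm_eq_abs, sq_abs]
  ring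

variable [CompleteSpace E] {f : E → ℝ} {f' : E → E}

theorem HasGradientAt.hasDerivAt_comp_add_smul {x v w : E} {t : ℝ}
    (h : HasGradientAt f w (x + t • v)) :
    HasDerivAt (fun s : ℝ => f (x + s • v)) ⟪w, v⟫ t := by
  have hline : HasDerivAt (fun s : ℝ => x + s • v) v t := by
    simpa using ((hasDerivAt_id t).smul_const v).const_add x
  exact h.hasFDerivAt.comp_hasDerivAt t hline

theorem le_add_inner_add_sq_of_gradient_lipschitz {L : ℝ}
    (hgrad : ∀ x, HasGradientAt f (f' x) x) (hsmooth : ∀ x y, ‖f' x - f' y‖ ≤ L * ‖x - y‖)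
    (x y : E) : f y ≤ f x + ⟪f' x, y - x⟫ + L / 2 * ‖y - x‖ ^ 2 := by
  set v := y - x
  set φ : ℝ → ℝ := fun t => f (x + t • v) - t * ⟪f' x, v⟫ - L / 2 * t ^ 2 * ‖v‖ ^ 2
  have hφ : ∀ t, HasDerivAt φ (⟪f' (x + t • v) - f' x, v⟫ - L * t * ‖v‖ ^ 2) t := by
    intro t
    have := ((((hgrad (x + t • v)).hasDerivAt_comp_add_smul (x := x)).sub
      ((hasDerivAt_id t).mul_const ⟪f' x, v⟫)).sub
      (((hasDerivAt_pow 2 t).const_mul (L / 2)).mul_const (‖v‖ ^ 2)))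
    refine this.congr_deriv ?_
    rw [inner_sub_left]; ring
  have hφ_nonpos : ∀ t, 0 ≤ t → ⟪f' (x + t • v) - f' x, v⟫ - L * t * ‖v‖ ^ 2 ≤ 0 := by
    intro t ht
    have := calc ⟪f' (x + t • v) - f' x, v⟫ ≤ ‖f' (x + t • v) - f' x‖ * ‖v‖ :=
          real_inner_le_norm _ _
      _ ≤ L * ‖t • v‖ * ‖v‖ := by
          gcongr; simpa using hsmooth (x + t • v) x
      _ = L * t * ‖v‖ ^ 2 := by rw [norm_smul, Real.norm_of_nonneg ht]; ring
    linarith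
  have hanti : AntitoneOn φ (Set.Ici 0) := by
    refine antitoneOn_of_hasDerivWithinAt_nonpos (convex_Ici 0)
      (fun t _ => (hφ t).continuousAt.continuousWithinAt)
      (fun t _ => (hφ t).hasDerivWithinAt) fun t ht => hφ_nonpos t ?_
    rw [interior_Ici] at ht
    exact ht.le
  have := hanti Set.self_mem_Ici (show (1 : ℝ) ∈ Set.Ici 0 by norm_num) zero_le_one
  simp only [φ, v, zero_smul, add_zero, one_smul, add_sub_cancel] at this
  linarith

end Descent

section Expectation

variable {E Ω : Type*} [NormedAddCommGroup E] [InnerProductSpace ℝ E] [MeasurableSpace Ω]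
  {P : Measure Ω} {g : Ω → E}

theorem integrable_const_sub_inner_add_sq_norm [IsFiniteMeasure P] (hg : Integrable g P)
    (hg2 : Integrable (fun ω => ‖g ω‖ ^ 2) P) (a b c : ℝ) (w : E) :
    Integrable (fun ω => a - b * ⟪w, g ω⟫ + c * ‖g ω‖ ^ 2) P :=
  ((integrable_const a).sub ((hg.const_inner w).const_mul b)).add (hg2.const_mul c)

theorem integral_const_sub_inner_add_sq_norm [CompleteSpace E] [IsProbabilityMeasure P]
    (hg : Integrable g P) (hg2 : Integrable (fun ω => ‖g ω‖ ^ 2) P) (a b c : ℝ) (w : E) :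
    ∫ ω, (a - b * ⟪w, g ω⟫ + c * ‖g ω‖ ^ 2) ∂P = a - b * ⟪w, ∫ ω, g ω ∂P⟫ + c * ∫ ω, ‖g ω‖ ^ 2 ∂P := by
  have hconst : Integrable (fun _ => a) P := integrable_const a
  have hinner : Integrable (fun ω => b * ⟪w, g ω⟫) P := (hg.const_inner w).const_mul b
  rw [integral_add (f := fun ω => a - b * ⟪w, g ω⟫) (hconst.sub hinner) (hg2.const_mul c),
    integral_sub hconst hinner, integral_const, integral_const_mul, integral_const_mul,
    integral_inner hg]
  simp

end Expectation

theorem descent_lemma_stochastic_general {d : ℕ} (f : EuclideanSpace ℝ (Fin d) → ℝ)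
    (f' : EuclideanSpace ℝ (Fin d) → EuclideanSpace ℝ (Fin d))
    (L μ' : ℝ)
    (hgrad : ∀ x, HasGradientAt f (f' x) x)
    (hsmooth : ∀ x y, ‖f' x - f' y‖ ≤ L * ‖x - y‖)
    (hsc : ∀ x y, f y + ⟪f' y, x - y⟫ + μ' / 2 * ‖x - y‖ ^ 2 ≤ f x)
    (xg : EuclideanSpace ℝ (Fin d)) (γ : ℝ) (hγ : 0 < γ)
    {Ω : Type*} [MeasurableSpace Ω] (P : Measure Ω) [IsProbabilityMeasure P]
    (g : Ω → EuclideanSpace ℝ (Fin d)) (hgint : Integrable g P)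
    (hg2int : Integrable (fun ω => ‖g ω‖ ^ 2) P)
    (u : EuclideanSpace ℝ (Fin d)) :
    ∫ ω, f (xg - γ • g ω) ∂P ≤
      f u - ⟪f' xg, u - xg⟫ - μ' / 2 * ‖u - xg‖ ^ 2 - γ / 2 * ‖f' xg‖ ^ 2
        + γ / 2 * ‖(∫ ω, g ω ∂P) - f' xg‖ ^ 2
        + L * γ ^ 2 / 2 * ∫ ω, ‖g ω‖ ^ 2 ∂P := by
  have upper : ∀ ω, f (xg - γ • g ω) ≤ f xg - γ * ⟪f' xg, g ω⟫ + L * γ ^ 2 / 2 * ‖g ω‖ ^ 2 :=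
    fun ω => by
      have := le_add_inner_add_sq_of_gradient_lipschitz hgrad hsmooth xg (xg - γ • g ω)
      linarith [inner_sub_smul_sub_add_sq (f' xg) xg (g ω) γ L]
  have lower : ∀ ω, f xg - γ * ⟪f' xg, g ω⟫ + μ' * γ ^ 2 / 2 * ‖g ω‖ ^ 2 ≤ f (xg - γ • g ω) :=
    fun ω => by
      have := hsc (xg - γ • g ω) xg
      linarith [inner_sub_smul_sub_add_sq (f' xg) xg (g ω) γ μ']
  have hf : Continuous f := continuous_iff_continuousAt.2 fun x => (hgrad x).continuousAt
  have hint : Integrable (fun ω => f (xg - γ • g ω)) P :=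
    integrable_of_le_of_le
      ((hf.comp (continuous_const.sub (continuous_const_smul γ))).comp_aestronglyMeasurable
        hgint.1)
      (ae_of_all _ lower) (ae_of_all _ upper)
      (integrable_const_sub_inner_add_sq_norm hgint hg2int _ _ _ _)
      (integrable_const_sub_inner_add_sq_norm hgint hg2int _ _ _ _)
  have hmean : -(γ * ⟪f' xg, ∫ ω, g ω ∂P⟫) ≤
      γ / 2 * ‖(∫ ω, g ω ∂P) - f' xg‖ ^ 2 - γ / 2 * ‖f' xg‖ ^ 2 := by
    rw [norm_sub_sq_real, real_inner_comm]
    linarith [mul_nonneg hγ.le (sq_nonneg ‖∫ ω, g ω ∂P‖)]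
  calc ∫ ω, f (xg - γ • g ω) ∂P
      ≤ ∫ ω, (f xg - γ * ⟪f' xg, g ω⟫ + L * γ ^ 2 / 2 * ‖g ω‖ ^ 2) ∂P :=
        integral_mono hint (integrable_const_sub_inner_add_sq_norm hgint hg2int _ _ _ _) upper
    _ = f xg - γ * ⟪f' xg, ∫ ω, g ω ∂P⟫ + L * γ ^ 2 / 2 * ∫ ω, ‖g ω‖ ^ 2 ∂P :=
        integral_const_sub_inner_add_sq_norm hgint hg2int _ _ _ _
    _ ≤ _ := by linarith [hsc u xg]

theorem descent_lemma_stochastic {d : ℕ} (f : EuclideanSpace ℝ (Fin d) → ℝ)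
    (f' : EuclideanSpace ℝ (Fin d) → EuclideanSpace ℝ (Fin d))
    (L μ' : ℝ) (hL : 0 < L) (hμ : 0 < μ')
    (hgrad : ∀ x, HasGradientAt f (f' x) x)
    (hsmooth : ∀ x y, ‖f' x - f' y‖ ≤ L * ‖x - y‖)
    (hsc : ∀ x y, f y + ⟪f' y, x - y⟫ + μ' / 2 * ‖x - y‖ ^ 2 ≤ f x)
    (xstar : EuclideanSpace ℝ (Fin d)) (hmin : ∀ y, f xstar ≤ f y)
    (xg : EuclideanSpace ℝ (Fin d)) (γ : ℝ) (hγ : 0 < γ)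
    {Ω : Type*} [MeasurableSpace Ω] (P : Measure Ω) [IsProbabilityMeasure P]
    (g : Ω → EuclideanSpace ℝ (Fin d)) (hgint : Integrable g P)
    (hg2int : Integrable (fun ω => ‖g ω‖ ^ 2) P)
    (u : EuclideanSpace ℝ (Fin d)) :
    ∫ ω, f (xg - γ • g ω) ∂P ≤
      f u - ⟪f' xg, u - xg⟫ - μ' / 2 * ‖u - xg‖ ^ 2 - γ / 2 * ‖f' xg‖ ^ 2
        + γ / 2 * ‖(∫ ω, g ω ∂P) - f' xg‖ ^ 2
        + L * γ ^ 2 / 2 * ∫ ω, ‖g ω‖ ^ 2 ∂P :=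
  descent_lemma_stochastic_general f f' L μ' hgrad hsmooth hsc xg γ hγ P g hgint hg2int u
end

section
/- Let x, x_f, x_g, x* ∈ ℝ^d, γ, η, α > 0, g a square-integrable random vector in ℝ^d, f : ℝ^d → ℝ differentiable, and suppose η·x_g + (1−η)x_f = β·x_g + (1−β)x for some β ∈ ℝ. Define x⁺ = η(x_g − γg) + (1−η)x_f. Then E[‖x⁺ − x*‖²] ≤ (1+αγη)(1−β)‖x−x*‖² + (1+αγη)β‖x_g − x*‖² + (1+αγη)(β²−β)‖x − x_g‖² + η²γ²E[‖g‖²] − 2ηγ⟨∇f(x_g), ηx_g + (1−η)x_f − x*⟩ + (ηγ/α)‖E[g] − ∇f(x_g)‖². -/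
open MeasureTheory RealInnerProductSpace

theorem iterate_distance_recursion {d : ℕ}
    (x xf xg xstar : EuclideanSpace ℝ (Fin d)) (γ η α β : ℝ)
    (hγ : 0 < γ) (hη : 0 < η) (hα : 0 < α)
    {Ω : Type*} [MeasurableSpace Ω] (P : Measure Ω) [IsProbabilityMeasure P]
    (g : Ω → EuclideanSpace ℝ (Fin d)) (hgint : Integrable g P)
    (hg2int : Integrable (fun ω => ‖g ω‖ ^ 2) P)
    (f : EuclideanSpace ℝ (Fin d) → ℝ)
    (f' : EuclideanSpace ℝ (Fin d) → EuclideanSpace ℝ (Fin d))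
    (hgrad : ∀ y, HasGradientAt f (f' y) y)
    (hcomb : η • xg + (1 - η) • xf = β • xg + (1 - β) • x) :
    ∫ ω, ‖η • (xg - γ • g ω) + (1 - η) • xf - xstar‖ ^ 2 ∂P ≤
      (1 + α * γ * η) * (1 - β) * ‖x - xstar‖ ^ 2
      + (1 + α * γ * η) * β * ‖xg - xstar‖ ^ 2
      + (1 + α * γ * η) * (β ^ 2 - β) * ‖x - xg‖ ^ 2
      + η ^ 2 * γ ^ 2 * ∫ ω, ‖g ω‖ ^ 2 ∂P
      - 2 * η * γ * ⟪f' xg, η • xg + (1 - η) • xf - xstar⟫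
      + η * γ / α * ‖(∫ ω, g ω ∂P) - f' xg‖ ^ 2 := by
  set c : ℝ := η * γ with hc
  have hcpos : 0 < c := mul_pos hη hγ
  set y : EuclideanSpace ℝ (Fin d) := η • xg + (1 - η) • xf - xstar with hy
  have hrw : ∀ ω, η • (xg - γ • g ω) + (1 - η) • xf - xstar = y - c • g ω := by
    intro ω
    rw [hy, hc]
    module
  have hexp : ∀ ω, ‖η • (xg - γ • g ω) + (1 - η) • xf - xstar‖ ^ 2
      = ‖y‖ ^ 2 - 2 * c * ⟪y, g ω⟫ + c ^ 2 * ‖g ω‖ ^ 2 := by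
    intro ω
    rw [hrw ω, @norm_sub_sq_real, real_inner_smul_right, norm_smul]
    simp only [Real.norm_eq_abs, mul_pow, sq_abs]
    ring
  have hinner_int : Integrable (fun ω => ⟪y, g ω⟫) P := hgint.const_inner y
  have hint : ∫ ω, ‖η • (xg - γ • g ω) + (1 - η) • xf - xstar‖ ^ 2 ∂P
      = ‖y‖ ^ 2 - 2 * c * ⟪y, ∫ ω, g ω ∂P⟫ + c ^ 2 * ∫ ω, ‖g ω‖ ^ 2 ∂P := by
    simp_rw [hexp]
    rw [integral_add, integral_sub (integrable_const _) (hinner_int.const_mul _),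
      integral_const, integral_const_mul, integral_inner hgint, integral_const_mul]
    · simp
    · exact (integrable_const _).sub (hinner_int.const_mul _)
    · exact hg2int.const_mul _
  have hsplit : ⟪y, ∫ ω, g ω ∂P⟫ = ⟪f' xg, y⟫ + ⟪(∫ ω, g ω ∂P) - f' xg, y⟫ := by
    have gen : ∀ u v w : EuclideanSpace ℝ (Fin d), ⟪w, u⟫ = ⟪v, w⟫ + ⟪u - v, w⟫ := by
      intro u v w
      rw [inner_sub_left, real_inner_comm u w]
      ring
    exact gen _ _ _
  have hyid : ‖y‖ ^ 2 = (1 - β) * ‖x - xstar‖ ^ 2 + β * ‖xg - xstar‖ ^ 2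
      + (β ^ 2 - β) * ‖x - xg‖ ^ 2 := by
    have hy2 : y = β • (xg - xstar) + (1 - β) • (x - xstar) := by
      rw [hy, hcomb]; module
    have gen : ∀ a b : EuclideanSpace ℝ (Fin d), ‖β • b + (1 - β) • a‖ ^ 2
        = (1 - β) * ‖a‖ ^ 2 + β * ‖b‖ ^ 2 + (β ^ 2 - β) * ‖a - b‖ ^ 2 := by
      intro a b
      rw [@norm_add_sq_real, @norm_sub_sq_real, norm_smul, norm_smul,
        real_inner_smul_left, real_inner_smul_right, real_inner_comm a b]
      simp only [Real.norm_eq_abs, mul_pow, sq_abs]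
      ring
    rw [hy2, show x - xg = (x - xstar) - (xg - xstar) from by abel]
    exact gen _ _
  have hbound : -(2 * c * ⟪(∫ ω, g ω ∂P) - f' xg, y⟫)
      ≤ c / α * ‖(∫ ω, g ω ∂P) - f' xg‖ ^ 2 + c * α * ‖y‖ ^ 2 := by
    set a := (∫ ω, g ω ∂P) - f' xg
    have h1 : -⟪a, y⟫ ≤ ‖a‖ * ‖y‖ := by
      have h := abs_real_inner_le_norm a y
      have := neg_abs_le ⟪a, y⟫
      linarith
    have h2 : 2 * (‖a‖ * ‖y‖) ≤ ‖a‖ ^ 2 / α + α * ‖y‖ ^ 2 := by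
      rw [div_add' _ _ _ hα.ne', le_div_iff₀ hα]
      nlinarith [sq_nonneg (‖a‖ - α * ‖y‖)]
    calc -(2 * c * ⟪a, y⟫) = c * (2 * (-⟪a, y⟫)) := by ring
      _ ≤ c * (‖a‖ ^ 2 / α + α * ‖y‖ ^ 2) := by
          apply mul_le_mul_of_nonneg_left _ hcpos.le
          linarith
      _ = c / α * ‖a‖ ^ 2 + c * α * ‖y‖ ^ 2 := by ring
  rw [hint, hsplit, hyid]
  rw [hyid] at hbound
  rw [hc] at hbound ⊢
  ring_nf at hbound ⊢
  linarith [hbound]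
end
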